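/- arXiv:2205.09264 — 3 statements merged into one kernel-verified Lean document; each statement's English description precedes it below -/
import Mathlib

section
/- Let (F, G, H) be an adjoint triple of additive functors (F ⊣ G ⊣ H) with F, H : B ⟶ A and G : A ⟶ B between abelian categories. If (U, V) is a balanced pair in B, then (F(U), H(V)) is a balanced pair in A. -/
section BalancedPairs

open CategoryTheory CategoryTheory.Limits

variable {𝒞 : Type*} [Category 𝒞]

/-- `f : c ⟶ M` is a right `C`-approximation. -/
def IsRightApprox (C : Set 𝒞) {c M : 𝒞} (f : c ⟶ M) : Prop :=
  c ∈ C ∧ ∀ c' ∈ C, ∀ g : c' ⟶ M, ∃ h : c' ⟶ c, h ≫ f = g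

/-- `C` is contravariantly finite. -/
def ContravariantlyFinite (C : Set 𝒞) : Prop :=
  ∀ M : 𝒞, ∃ (c : 𝒞) (f : c ⟶ M), IsRightApprox C f

/-- `g : M ⟶ c` is a left `C`-approximation. -/
def IsLeftApprox (C : Set 𝒞) {M c : 𝒞} (g : M ⟶ c) : Prop :=
  c ∈ C ∧ ∀ c' ∈ C, ∀ f : M ⟶ c', ∃ h : c ⟶ c', g ≫ h = f

/-- `C` is covariantly finite. -/
def CovariantlyFinite (C : Set 𝒞) : Prop :=
  ∀ M : 𝒞, ∃ (c : 𝒞) (g : M ⟶ c), IsLeftApprox C g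

/-- `C` is admissible: every right `C`-approximation is an epimorphism. -/
def AdmissibleClass (C : Set 𝒞) : Prop :=
  ∀ (M c : 𝒞) (f : c ⟶ M), IsRightApprox C f → Epi f

variable [Abelian 𝒞]

/-- A complex `L` is right `X`-acyclic: `Hom(x, L)` is acyclic for every `x ∈ X`. -/
def RightXAcyclic (Xc : Set 𝒞) (L : CochainComplex 𝒞 ℤ) : Prop :=
  ∀ x ∈ Xc, ∀ i : ℤ, ∀ f : x ⟶ L.X i, f ≫ L.d i (i + 1) = 0 →
    ∃ g : x ⟶ L.X (i - 1), g ≫ L.d (i - 1) i = f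

/-- A complex `L` is left `Y`-acyclic: `Hom(L, y)` is acyclic for every `y ∈ Y`. -/
def LeftYAcyclic (Yc : Set 𝒞) (L : CochainComplex 𝒞 ℤ) : Prop :=
  ∀ y ∈ Yc, ∀ i : ℤ, ∀ f : L.X i ⟶ y, L.d (i - 1) i ≫ f = 0 →
    ∃ g : L.X (i + 1) ⟶ y, L.d i (i + 1) ≫ g = f

/-- `(X, Y)` is a balanced pair: `X` is contravariantly finite, `Y` is covariantly finite, and
the right `X`-acyclic complexes coincide with the left `Y`-acyclic complexes. -/
def BalancedPair (Xc Yc : Set 𝒞) : Prop :=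
  ContravariantlyFinite Xc ∧ CovariantlyFinite Yc ∧
    ∀ L : CochainComplex 𝒞 ℤ, RightXAcyclic Xc L ↔ LeftYAcyclic Yc L

end BalancedPairs

/-- The essential image of a class of objects under a functor. -/
def imCl {𝒞 𝒟 : Type*} [CategoryTheory.Category 𝒞] [CategoryTheory.Category 𝒟]
    (F : CategoryTheory.Functor 𝒞 𝒟) (C : Set 𝒞) : Set 𝒟 :=
  {b | ∃ a ∈ C, Nonempty (F.obj a ≅ b)}


/-! The adjunction bijections `Hom(F u, M) ≃ Hom(u, G M)` and `Hom(M, H v) ≃ Hom(G M, v)` are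
natural, so they transpose a right `U`-approximation of `G M` into a right `F(U)`-approximation
of `M`, and a left `V`-approximation of `G M` into a left `H(V)`-approximation of `M`. In the same
way a complex `L` over `A` is `Hom(F(U), −)`-acyclic iff `G L` is `Hom(U, −)`-acyclic, and
`Hom(−, H(V))`-acyclic iff `G L` is `Hom(−, V)`-acyclic; so the balancedness of `(U, V)`, applied
to `G L`, gives that of `(F(U), H(V))`. -/

open CategoryTheory CategoryTheory.Limits

section

variable {C D : Type*} [Category C] [Category D]

theorem forall_mem_imCl_iff (F : C ⥤ D) (U : Set C) {P : D → Prop}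
    (hP : ∀ {x x' : D}, (x ≅ x') → P x → P x') :
    (∀ x ∈ imCl F U, P x) ↔ ∀ u ∈ U, P (F.obj u) :=
  ⟨fun h u hu => h _ ⟨u, hu, ⟨Iso.refl _⟩⟩, fun h _ ⟨u, hu, ⟨e⟩⟩ => hP e (h u hu)⟩

variable {F : C ⥤ D} {G : D ⥤ C}

theorem IsRightApprox.homEquiv_symm (adj : F ⊣ G) {U : Set C} {u : C} {M : D}
    {f : u ⟶ G.obj M} (hf : IsRightApprox U f) :
    IsRightApprox (imCl F U) ((adj.homEquiv u M).symm f) := by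
  refine ⟨⟨u, hf.1, ⟨Iso.refl _⟩⟩, ?_⟩
  rintro _ ⟨u', hu', ⟨e⟩⟩ g
  obtain ⟨h, hh⟩ := hf.2 u' hu' (adj.homEquiv u' M (e.hom ≫ g))
  refine ⟨e.inv ≫ F.map h, ?_⟩
  rw [Category.assoc, ← adj.homEquiv_naturality_left_symm, hh, Equiv.symm_apply_apply,
    e.inv_hom_id_assoc]

theorem IsLeftApprox.homEquiv (adj : F ⊣ G) {V : Set D} {M : C} {v : D}
    {g : F.obj M ⟶ v} (hg : IsLeftApprox V g) :
    IsLeftApprox (imCl G V) (adj.homEquiv M v g) := by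
  refine ⟨⟨v, hg.1, ⟨Iso.refl _⟩⟩, ?_⟩
  rintro _ ⟨v', hv', ⟨e⟩⟩ f
  obtain ⟨h, hh⟩ := hg.2 v' hv' ((adj.homEquiv M v').symm (f ≫ e.inv))
  refine ⟨G.map h ≫ e.hom, ?_⟩
  rw [← Category.assoc, ← adj.homEquiv_naturality_right, hh, Equiv.apply_symm_apply,
    Category.assoc, e.inv_hom_id, Category.comp_id]

theorem ContravariantlyFinite.imCl (adj : F ⊣ G) {U : Set C} (hU : ContravariantlyFinite U) :
    ContravariantlyFinite (imCl F U) := fun M =>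
  let ⟨_, _, hf⟩ := hU (G.obj M)
  ⟨_, _, hf.homEquiv_symm adj⟩

theorem CovariantlyFinite.imCl (adj : F ⊣ G) {V : Set D} (hV : CovariantlyFinite V) :
    CovariantlyFinite (imCl G V) := fun M =>
  let ⟨_, _, hg⟩ := hV (F.obj M)
  ⟨_, _, hg.homEquiv adj⟩

end

section

variable {C D : Type*} [Category C] [Category D] [HasZeroMorphisms C] [HasZeroMorphisms D]

def ExactUnderHomFrom (x : C) {X Y Z : C} (a : X ⟶ Y) (b : Y ⟶ Z) : Prop :=
  ∀ f : x ⟶ Y, f ≫ b = 0 → ∃ g : x ⟶ X, g ≫ a = f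

def ExactUnderHomTo {X Y Z : C} (a : X ⟶ Y) (b : Y ⟶ Z) (y : C) : Prop :=
  ∀ f : Y ⟶ y, a ≫ f = 0 → ∃ g : Z ⟶ y, b ≫ g = f

theorem ExactUnderHomFrom.of_iso {x x' X Y Z : C} {a : X ⟶ Y} {b : Y ⟶ Z}
    (h : ExactUnderHomFrom x a b) (e : x ≅ x') : ExactUnderHomFrom x' a b := by
  intro f hf
  obtain ⟨g, hg⟩ := h (e.hom ≫ f) (by rw [Category.assoc, hf, comp_zero])
  exact ⟨e.inv ≫ g, by rw [Category.assoc, hg, e.inv_hom_id_assoc]⟩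

theorem ExactUnderHomTo.of_iso {X Y Z y y' : C} {a : X ⟶ Y} {b : Y ⟶ Z}
    (h : ExactUnderHomTo a b y) (e : y ≅ y') : ExactUnderHomTo a b y' := by
  intro f hf
  obtain ⟨g, hg⟩ := h (f ≫ e.inv) (by rw [← Category.assoc, hf, zero_comp])
  exact ⟨g ≫ e.hom, by rw [← Category.assoc, hg, Category.assoc, e.inv_hom_id, Category.comp_id]⟩

variable {F : C ⥤ D} {G : D ⥤ C}

theorem CategoryTheory.Adjunction.homEquiv_eq_zero_iff (adj : F ⊣ G) {x : C} {y : D} (f : F.obj x ⟶ y) :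
    adj.homEquiv x y f = 0 ↔ f = 0 := by
  have := adj.isRightAdjoint
  rw [← (adj.homEquiv x y).injective.eq_iff, adj.homEquiv_unit, adj.homEquiv_unit,
    G.map_zero, comp_zero]

theorem CategoryTheory.Adjunction.exactUnderHomFrom_obj_iff (adj : F ⊣ G) (x : C) {X Y Z : D}
    (a : X ⟶ Y) (b : Y ⟶ Z) :
    ExactUnderHomFrom (F.obj x) a b ↔ ExactUnderHomFrom x (G.map a) (G.map b) := by
  refine (adj.homEquiv x Y).forall_congr fun f => imp_congr ?_ ?_
  · rw [← adj.homEquiv_naturality_right, adj.homEquiv_eq_zero_iff]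
  · refine (adj.homEquiv x X).exists_congr fun g => ?_
    rw [← adj.homEquiv_naturality_right, (adj.homEquiv x Y).apply_eq_iff_eq]

theorem CategoryTheory.Adjunction.exactUnderHomTo_obj_iff (adj : F ⊣ G) {X Y Z : C}
    (a : X ⟶ Y) (b : Y ⟶ Z) (y : D) :
    ExactUnderHomTo a b (G.obj y) ↔ ExactUnderHomTo (F.map a) (F.map b) y := by
  refine ((adj.homEquiv Y y).forall_congr fun f => imp_congr ?_ ?_).symm
  · rw [← adj.homEquiv_naturality_left, adj.homEquiv_eq_zero_iff]
  · refine (adj.homEquiv Z y).exists_congr fun g => ?_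
    rw [← adj.homEquiv_naturality_left, (adj.homEquiv Y y).apply_eq_iff_eq]

end

section

variable {C D : Type*} [Category C] [Category D] [Abelian C] [Abelian D]
  {F : C ⥤ D} {G : D ⥤ C}

theorem rightXAcyclic_imCl_iff [G.PreservesZeroMorphisms] (adj : F ⊣ G) (U : Set C) (L : CochainComplex D ℤ) :
    RightXAcyclic (imCl F U) L ↔
      RightXAcyclic U ((G.mapHomologicalComplex (ComplexShape.up ℤ)).obj L) := by
  change (∀ x ∈ imCl F U, ∀ i, ExactUnderHomFrom x (L.d (i - 1) i) (L.d i (i + 1))) ↔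
    ∀ u ∈ U, ∀ i, ExactUnderHomFrom u (G.map (L.d (i - 1) i)) (G.map (L.d i (i + 1)))
  rw [forall_mem_imCl_iff F U fun e h i => (h i).of_iso e]
  exact forall₂_congr fun u _ => forall_congr' fun i => adj.exactUnderHomFrom_obj_iff u _ _

theorem leftYAcyclic_imCl_iff [F.PreservesZeroMorphisms] (adj : F ⊣ G) (V : Set D) (L : CochainComplex C ℤ) :
    LeftYAcyclic (imCl G V) L ↔
      LeftYAcyclic V ((F.mapHomologicalComplex (ComplexShape.up ℤ)).obj L) := by
  change (∀ y ∈ imCl G V, ∀ i, ExactUnderHomTo (L.d (i - 1) i) (L.d i (i + 1)) y) ↔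
    ∀ v ∈ V, ∀ i, ExactUnderHomTo (F.map (L.d (i - 1) i)) (F.map (L.d i (i + 1))) v
  rw [forall_mem_imCl_iff G V fun e h i => (h i).of_iso e]
  exact forall₂_congr fun v _ => forall_congr' fun i => adj.exactUnderHomTo_obj_iff _ _ v

end

theorem balancedPair_of_adjoint_triple_general {B A : Type*} [Category B] [Category A]
    [Abelian B] [Abelian A]
    (F : B ⥤ A) (G : A ⥤ B) (H : B ⥤ A)
    (adj₁ : F ⊣ G) (adj₂ : G ⊣ H)
    (U V : Set B) (hbp : BalancedPair U V) :
    BalancedPair (imCl F U) (imCl H V) := by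
  obtain ⟨hU, hV, hUV⟩ := hbp
  have := adj₁.isRightAdjoint
  refine ⟨hU.imCl adj₁, hV.imCl adj₂, fun L => ?_⟩
  rw [rightXAcyclic_imCl_iff adj₁, leftYAcyclic_imCl_iff adj₂, hUV]

/-- If `(F, G, H)` is an adjoint triple of additive functors between abelian categories and
`(U, V)` is a balanced pair in `B`, then `(F(U), H(V))` is a balanced pair in `A`. -/
theorem balancedPair_of_adjoint_triple {B A : Type*} [Category B] [Category A]
    [Abelian B] [Abelian A]
    (F : B ⥤ A) (G : A ⥤ B) (H : B ⥤ A) [F.Additive] [G.Additive] [H.Additive]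
    (adj₁ : F ⊣ G) (adj₂ : G ⊣ H)
    (U V : Set B) (hbp : BalancedPair U V) :
    BalancedPair (imCl F U) (imCl H V) :=
  balancedPair_of_adjoint_triple_general F G H adj₁ adj₂ U V hbp
end

section
/- Let R(A', A, A'') be a recollement of abelian categories with balanced pairs (X'', Y'') in A''. With X, Y defined as in the recollement-glued classes (X = {X : i*X ∈ X', j*X ∈ X''}, Y = {Y : i^!Y ∈ Y', j*Y ∈ Y''}), the pair (j_! j*(X), j_* j*(Y)) = (j_!(X''), j_*(Y'')) is a balanced pair in A. Moreover, if (X'', Y'') is admissible and j* is faithful, then (j_!(X''), j_*(Y'')) is admissible. -/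
open CategoryTheory CategoryTheory.Limits

/-- A recollement of abelian categories `R(A', A, A'')`: adjoint triples
`(i*, i_*, i^!)` and `(j_!, j*, j_*)`, with `i_*, j_!, j_*` fully faithful and
`Im i_* = Ker j*`. -/
structure Recollement (A' : Type*) (A : Type*) (A'' : Type*)
    [Category A'] [Category A] [Category A''] where
  /-- `i_* : A' ⥤ A` -/
  iₛ : A' ⥤ A
  /-- `i* : A ⥤ A'` -/
  iStar : A ⥤ A'
  /-- `i^! : A ⥤ A'` -/
  iShriek : A ⥤ A'
  /-- `j_! : A'' ⥤ A` -/
  jLShriek : A'' ⥤ A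
  /-- `j* : A ⥤ A''` -/
  jStar : A ⥤ A''
  /-- `j_* : A'' ⥤ A` -/
  jₛ : A'' ⥤ A
  adj₁ : iStar ⊣ iₛ
  adj₂ : iₛ ⊣ iShriek
  adj₃ : jLShriek ⊣ jStar
  adj₄ : jStar ⊣ jₛ
  ff_iₛ : iₛ.FullyFaithful
  ff_jLShriek : jLShriek.FullyFaithful
  ff_jₛ : jₛ.FullyFaithful
  im_eq_ker : ∀ X : A, (∃ Y : A', Nonempty (iₛ.obj Y ≅ X)) ↔ IsZero (jStar.obj X)

open CategoryTheory CategoryTheory.Limits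

/-- A class of objects closed under isomorphisms and containing the zero objects. -/
def IsAdditiveClass {𝒞 : Type*} [Category 𝒞] (C : Set 𝒞) : Prop :=
  (∀ ⦃X Y : 𝒞⦄, (X ≅ Y) → X ∈ C → Y ∈ C) ∧ (∀ Z : 𝒞, IsZero Z → Z ∈ C)

/-!
Everything is transported along the adjunctions `j_! ⊣ j* ⊣ j_*`. A right `X''`-approximation
`c ⟶ j*M` corresponds to a right `j_!(X'')`-approximation `j_! c ⟶ M`, and dually for left
approximations; and `Hom(j_! x, L) ≅ Hom(x, j* L)`, `Hom(L, j_* y) ≅ Hom(j* L, y)` naturally in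
`L`, so `L` is right `j_!(X'')`-acyclic (left `j_*(Y'')`-acyclic) iff `j* L` is right
`X''`-acyclic (left `Y''`-acyclic). The glued classes collapse because `j* j_! ≅ 1 ≅ j* j_*`
while `i* j_! = 0 = i^! j_*`.
-/

section Adjunction

variable {C D : Type*} [Category C] [Category D]

lemma imCl_subset {F : C ⥤ D} {S : Set C} {T : Set D}
    (hT : ∀ ⦃X Y : D⦄, (X ≅ Y) → X ∈ T → Y ∈ T) (hS : ∀ s ∈ S, F.obj s ∈ T) :
    imCl F S ⊆ T := by
  rintro _ ⟨s, hs, ⟨e⟩⟩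
  exact hT e (hS s hs)

namespace CategoryTheory.Adjunction

variable {L : C ⥤ D} {F : D ⥤ C} {G : C ⥤ D}

section ZeroMorphisms

variable [HasZeroMorphisms C] [HasZeroMorphisms D]

lemma homEquiv_zero (adj : L ⊣ F) [F.PreservesZeroMorphisms] (X : C) (Y : D) :
    adj.homEquiv X Y 0 = 0 := by
  rw [homEquiv_unit, Functor.map_zero, comp_zero]

lemma homEquiv_symm_zero (adj : L ⊣ F) [L.PreservesZeroMorphisms] (X : C) (Y : D) :
    (adj.homEquiv X Y).symm 0 = 0 := by
  rw [homEquiv_counit, Functor.map_zero, zero_comp]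

lemma isZero_leftAdjoint_obj (adj : L ⊣ F) [L.PreservesZeroMorphisms]
    (h : ∀ Y, IsZero (F.obj Y)) (X : C) : IsZero (L.obj X) := by
  rw [IsZero.iff_id_eq_zero, ← (adj.homEquiv _ _).symm_apply_apply (𝟙 _),
    (h _).eq_zero_of_tgt (adj.homEquiv _ _ _), homEquiv_symm_zero]

lemma isZero_rightAdjoint_obj (adj : L ⊣ F) [F.PreservesZeroMorphisms]
    (h : ∀ X, IsZero (L.obj X)) (Y : D) : IsZero (F.obj Y) := by
  rw [IsZero.iff_id_eq_zero, ← (adj.homEquiv _ _).apply_symm_apply (𝟙 _),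
    (h _).eq_zero_of_src ((adj.homEquiv _ _).symm _), homEquiv_zero]

end ZeroMorphisms

lemma contravariantlyFinite_imCl (adj : L ⊣ F) {X : Set C} (hX : ContravariantlyFinite X) :
    ContravariantlyFinite (imCl L X) := by
  intro M
  obtain ⟨c, f, hc, hf⟩ := hX (F.obj M)
  refine ⟨L.obj c, (adj.homEquiv _ _).symm f, ⟨c, hc, ⟨Iso.refl _⟩⟩, ?_⟩
  rintro _ ⟨x, hx, ⟨e⟩⟩ g
  obtain ⟨h, hh⟩ := hf x hx (adj.homEquiv _ _ (e.hom ≫ g))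
  refine ⟨e.inv ≫ L.map h, ?_⟩
  rw [Category.assoc, ← homEquiv_naturality_left_symm, hh, Equiv.symm_apply_apply,
    e.inv_hom_id_assoc]

lemma covariantlyFinite_imCl (adj : F ⊣ G) {Y : Set C} (hY : CovariantlyFinite Y) :
    CovariantlyFinite (imCl G Y) := by
  intro M
  obtain ⟨c, g, hc, hg⟩ := hY (F.obj M)
  refine ⟨G.obj c, adj.homEquiv _ _ g, ⟨c, hc, ⟨Iso.refl _⟩⟩, ?_⟩
  rintro _ ⟨y, hy, ⟨e⟩⟩ f
  obtain ⟨h, hh⟩ := hg y hy ((adj.homEquiv _ _).symm (f ≫ e.inv))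
  refine ⟨G.map h ≫ e.hom, ?_⟩
  rw [← Category.assoc, ← homEquiv_naturality_right, hh, Equiv.apply_symm_apply,
    Category.assoc, e.inv_hom_id, Category.comp_id]

section Acyclicity

variable [Abelian C] [Abelian D] [F.PreservesZeroMorphisms]

lemma rightXAcyclic_imCl_iff (adj : L ⊣ F) (X : Set C) (K : CochainComplex D ℤ) :
    RightXAcyclic (imCl L X) K ↔ RightXAcyclic X ((F.mapHomologicalComplex _).obj K) := by
  have := adj.isLeftAdjoint
  constructor
  · intro H x hx i (f : x ⟶ F.obj (K.X i)) (hf : f ≫ F.map (K.d i (i + 1)) = 0)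
    obtain ⟨g, hg⟩ := H (L.obj x) ⟨x, hx, ⟨Iso.refl _⟩⟩ i ((adj.homEquiv _ _).symm f) (by
      rw [← homEquiv_naturality_right_symm, hf, homEquiv_symm_zero])
    refine ⟨adj.homEquiv _ _ g, (?_ : adj.homEquiv _ _ g ≫ F.map (K.d (i - 1) i) = f)⟩
    rw [← homEquiv_naturality_right, hg, Equiv.apply_symm_apply]
  · rintro H _ ⟨x, hx, ⟨e⟩⟩ i f hf
    obtain ⟨(g : x ⟶ F.obj (K.X (i - 1))), (hg : g ≫ F.map (K.d (i - 1) i) = _)⟩ :=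
      H x hx i (adj.homEquiv _ _ (e.hom ≫ f)) (show _ ≫ F.map (K.d i (i + 1)) = 0 by
        rw [← homEquiv_naturality_right, Category.assoc, hf, comp_zero, homEquiv_zero])
    refine ⟨e.inv ≫ (adj.homEquiv _ _).symm g, ?_⟩
    rw [Category.assoc, ← homEquiv_naturality_right_symm, hg, Equiv.symm_apply_apply,
      e.inv_hom_id_assoc]

lemma leftYAcyclic_imCl_iff (adj : F ⊣ G) (Y : Set C) (K : CochainComplex D ℤ) :
    LeftYAcyclic (imCl G Y) K ↔ LeftYAcyclic Y ((F.mapHomologicalComplex _).obj K) := by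
  have := adj.isRightAdjoint
  constructor
  · intro H y hy i (f : F.obj (K.X i) ⟶ y) (hf : F.map (K.d (i - 1) i) ≫ f = 0)
    obtain ⟨g, hg⟩ := H (G.obj y) ⟨y, hy, ⟨Iso.refl _⟩⟩ i (adj.homEquiv _ _ f) (by
      rw [← homEquiv_naturality_left, hf, homEquiv_zero])
    refine ⟨(adj.homEquiv _ _).symm g,
      (?_ : F.map (K.d i (i + 1)) ≫ (adj.homEquiv _ _).symm g = f)⟩
    rw [← homEquiv_naturality_left_symm, hg, Equiv.symm_apply_apply]
  · rintro H _ ⟨y, hy, ⟨e⟩⟩ i f hf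
    obtain ⟨(g : F.obj (K.X (i + 1)) ⟶ y), (hg : F.map (K.d i (i + 1)) ≫ g = _)⟩ :=
      H y hy i ((adj.homEquiv _ _).symm (f ≫ e.inv)) (show F.map (K.d (i - 1) i) ≫ _ = 0 by
        rw [← homEquiv_naturality_left_symm, ← Category.assoc, hf, zero_comp, homEquiv_symm_zero])
    refine ⟨adj.homEquiv _ _ g ≫ e.hom, ?_⟩
    rw [← Category.assoc, ← homEquiv_naturality_left, hg, Equiv.apply_symm_apply, Category.assoc,
      e.inv_hom_id, Category.comp_id]

end Acyclicity

lemma balancedPair_imCl [Abelian C] [Abelian D] (adjL : L ⊣ F) (adjR : F ⊣ G) {X Y : Set C}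
    (h : BalancedPair X Y) : BalancedPair (imCl L X) (imCl G Y) := by
  have := adjL.isRightAdjoint
  refine ⟨adjL.contravariantlyFinite_imCl h.1, adjR.covariantlyFinite_imCl h.2.1, fun K => ?_⟩
  rw [adjL.rightXAcyclic_imCl_iff, adjR.leftYAcyclic_imCl_iff]
  exact h.2.2 _

lemma isRightApprox_homEquiv (adj : L ⊣ F) [L.Full] {X : Set C} {a : C} {M : D} (ha : a ∈ X)
    {f : L.obj a ⟶ M} (hf : IsRightApprox (imCl L X) f) :
    IsRightApprox X (adj.homEquiv a M f) := by
  refine ⟨ha, fun a' ha' g => ?_⟩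
  obtain ⟨h, hh⟩ := hf.2 _ ⟨a', ha', ⟨Iso.refl _⟩⟩ ((adj.homEquiv _ _).symm g)
  refine ⟨L.preimage h, ?_⟩
  rw [← homEquiv_naturality_left, L.map_preimage, hh, Equiv.apply_symm_apply]

lemma admissibleClass_imCl (adj : L ⊣ F) [L.Full] [F.Faithful] {X : Set C}
    (hX : AdmissibleClass X) : AdmissibleClass (imCl L X) := by
  rintro M c f ⟨⟨a, ha, ⟨e⟩⟩, hf⟩
  have hf' : IsRightApprox (imCl L X) (e.hom ≫ f) :=
    ⟨⟨a, ha, ⟨Iso.refl _⟩⟩, fun c' hc' g => by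
      obtain ⟨h, hh⟩ := hf c' hc' g
      exact ⟨h ≫ e.inv, by rw [Category.assoc, e.inv_hom_id_assoc, hh]⟩⟩
  have hepi := hX _ _ _ (adj.isRightApprox_homEquiv ha hf')
  rw [homEquiv_unit] at hepi
  have : Epi (F.map (e.hom ≫ f)) := epi_of_epi (adj.unit.app a) _
  have : Epi (e.hom ≫ f) := F.epi_of_epi_map this
  exact epi_of_epi e.hom f

end CategoryTheory.Adjunction

end Adjunction

namespace Recollement

variable {A' A A'' : Type*} [Category A'] [Category A] [Category A'']
  [Abelian A'] [Abelian A] [Abelian A''] (R : Recollement A' A A'')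

lemma isZero_iStar_obj_jLShriek (x : A'') : IsZero (R.iStar.obj (R.jLShriek.obj x)) := by
  have := R.adj₁.isLeftAdjoint
  have := R.adj₃.isLeftAdjoint
  exact (R.adj₃.comp R.adj₁).isZero_leftAdjoint_obj
    (fun y => (R.im_eq_ker _).mp ⟨y, ⟨Iso.refl _⟩⟩) x

lemma isZero_iShriek_obj_jₛ (y : A'') : IsZero (R.iShriek.obj (R.jₛ.obj y)) := by
  have := R.adj₂.isRightAdjoint
  have := R.adj₄.isRightAdjoint
  exact (R.adj₂.comp R.adj₄).isZero_rightAdjoint_obj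
    (fun x => (R.im_eq_ker _).mp ⟨x, ⟨Iso.refl _⟩⟩) y

lemma imCl_jStar_gluedX {X' : Set A'} {X'' : Set A''} (hX' : ∀ Z : A', IsZero Z → Z ∈ X')
    (hX'' : ∀ ⦃X Y : A''⦄, (X ≅ Y) → X ∈ X'' → Y ∈ X'') :
    imCl R.jStar {X : A | R.iStar.obj X ∈ X' ∧ R.jStar.obj X ∈ X''} = X'' := by
  refine (imCl_subset hX'' fun _ hX => hX.2).antisymm fun x hx => ?_
  have := R.ff_jLShriek.full
  have := R.ff_jLShriek.faithful
  let e := asIso (R.adj₃.unit.app x)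
  exact ⟨R.jLShriek.obj x, ⟨hX' _ (R.isZero_iStar_obj_jLShriek x), hX'' e hx⟩, ⟨e.symm⟩⟩

lemma imCl_jStar_gluedY {Y' : Set A'} {Y'' : Set A''} (hY' : ∀ Z : A', IsZero Z → Z ∈ Y')
    (hY'' : ∀ ⦃X Y : A''⦄, (X ≅ Y) → X ∈ Y'' → Y ∈ Y'') :
    imCl R.jStar {Y : A | R.iShriek.obj Y ∈ Y' ∧ R.jStar.obj Y ∈ Y''} = Y'' := by
  refine (imCl_subset hY'' fun _ hY => hY.2).antisymm fun y hy => ?_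
  have := R.ff_jₛ.full
  have := R.ff_jₛ.faithful
  let e := asIso (R.adj₄.counit.app y)
  exact ⟨R.jₛ.obj y, ⟨hY' _ (R.isZero_iShriek_obj_jₛ y), hY'' e.symm hy⟩, ⟨e⟩⟩

end Recollement

theorem recollement_glued_balancedPair_general {A' A A'' : Type*}
    [Category A'] [Category A] [Category A'']
    [Abelian A'] [Abelian A] [Abelian A'']
    (R : Recollement A' A A'')
    (X' Y' : Set A') (X'' Y'' : Set A'')
    (hX' : IsAdditiveClass X') (hY' : IsAdditiveClass Y')
    (hX'' : IsAdditiveClass X'') (hY'' : IsAdditiveClass Y'')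
    (hbp'' : BalancedPair X'' Y'') :
    (imCl R.jLShriek (imCl R.jStar {X : A | R.iStar.obj X ∈ X' ∧ R.jStar.obj X ∈ X''}) =
        imCl R.jLShriek X'' ∧
      imCl R.jₛ (imCl R.jStar {Y : A | R.iShriek.obj Y ∈ Y' ∧ R.jStar.obj Y ∈ Y''}) =
        imCl R.jₛ Y'') ∧
    BalancedPair (imCl R.jLShriek X'') (imCl R.jₛ Y'') ∧
    ((AdmissibleClass X'' ∧ R.jStar.Faithful) →
      AdmissibleClass (imCl R.jLShriek X'')) := by
  refine ⟨⟨by rw [R.imCl_jStar_gluedX hX'.2 hX''.1], by rw [R.imCl_jStar_gluedY hY'.2 hY''.1]⟩,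
    R.adj₃.balancedPair_imCl R.adj₄ hbp'', ?_⟩
  rintro ⟨hadm, _⟩
  have := R.ff_jLShriek.full
  exact R.adj₃.admissibleClass_imCl hadm

/-- Given a recollement and balanced pairs `(X', Y')` in `A'` and `(X'', Y'')` in `A''`, with
the glued classes `X = {X | i*X ∈ X', j*X ∈ X''}` and `Y = {Y | i^!Y ∈ Y', j*Y ∈ Y''}`,
the pair `(j_! j*(X), j_* j*(Y)) = (j_!(X''), j_*(Y''))` is a balanced pair in `A`; moreover,
if `(X'', Y'')` is admissible and `j*` is faithful, then it is admissible. -/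
theorem recollement_glued_balancedPair {A' A A'' : Type*}
    [Category A'] [Category A] [Category A'']
    [Abelian A'] [Abelian A] [Abelian A'']
    (R : Recollement A' A A'')
    (X' Y' : Set A') (X'' Y'' : Set A'')
    (hX' : IsAdditiveClass X') (hY' : IsAdditiveClass Y')
    (hX'' : IsAdditiveClass X'') (hY'' : IsAdditiveClass Y'')
    (hbp' : BalancedPair X' Y') (hbp'' : BalancedPair X'' Y'') :
    (imCl R.jLShriek (imCl R.jStar {X : A | R.iStar.obj X ∈ X' ∧ R.jStar.obj X ∈ X''}) =
        imCl R.jLShriek X'' ∧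
      imCl R.jₛ (imCl R.jStar {Y : A | R.iShriek.obj Y ∈ Y' ∧ R.jStar.obj Y ∈ Y''}) =
        imCl R.jₛ Y'') ∧
    BalancedPair (imCl R.jLShriek X'') (imCl R.jₛ Y'') ∧
    ((AdmissibleClass X'' ∧ R.jStar.Faithful) →
      AdmissibleClass (imCl R.jLShriek X'')) :=
  recollement_glued_balancedPair_general R X' Y' X'' Y'' hX' hY' hX'' hY'' hbp''
end

section
/- Let T be X-self-orthogonal with respect to an admissible balanced pair (X, Y) in an abelian category A. Then Pres^n_X(_T X) = Pres^n_X(T) for every n ≥ 1. -/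
open CategoryTheory CategoryTheory.Limits

section Tilting

variable {𝒞 : Type*} [Category 𝒞] [Abelian 𝒞]

/-- A left `X`-resolution of `M`: a complex `⋯ → P 1 → P 0 → M → 0` with all `P n ∈ Xc`
which is acyclic under `Hom(x, −)` for every `x ∈ Xc`. -/
structure LeftRes (Xc : Set 𝒞) (M : 𝒞) where
  P : ℕ → 𝒞
  d : ∀ n, P (n + 1) ⟶ P n
  ε : P 0 ⟶ M
  mem : ∀ n, P n ∈ Xc
  dd : ∀ n, d (n + 1) ≫ d n = 0
  dε : d 0 ≫ ε = 0
  homSurj : ∀ x ∈ Xc, ∀ f : x ⟶ M, ∃ g : x ⟶ P 0, g ≫ ε = f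
  homExact₀ : ∀ x ∈ Xc, ∀ f : x ⟶ P 0, f ≫ ε = 0 → ∃ g : x ⟶ P 1, g ≫ d 0 = f
  homExact : ∀ x ∈ Xc, ∀ n, ∀ f : x ⟶ P (n + 1), f ≫ d n = 0 →
    ∃ g : x ⟶ P (n + 2), g ≫ d (n + 1) = f

/-- `Ext^i_X(T, M) = 0` for all `i ≥ 1`: for every left `X`-resolution of `T`, the complex
`Hom(P•, M)` is exact in all positive degrees. -/
def ExtVanish (Xc : Set 𝒞) (T M : 𝒞) : Prop :=
  ∀ (R : LeftRes Xc T) (i : ℕ) (f : R.P (i + 1) ⟶ M), R.d (i + 1) ≫ f = 0 →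
    ∃ g : R.P i ⟶ M, R.d i ≫ g = f

/-- `K ∈ Add T`: `K` is a direct summand of a coproduct of copies of `T`. -/
def InAdd [HasCoproducts.{0} 𝒞] (T K : 𝒞) : Prop :=
  ∃ (I : Type) (J : 𝒞), Nonempty ((K ⊞ J) ≅ ∐ fun _ : I => T)

/-- `T` is `X`-self-orthogonal: `Ext^{i≥1}_X(T, T^{(I)}) = 0` for every set `I`. -/
def XSelfOrth [HasCoproducts.{0} 𝒞] (Xc : Set 𝒞) (T : 𝒞) : Prop :=
  ∀ I : Type, ExtVanish Xc T (∐ fun _ : I => T)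

/-- `0 → K → B → M → 0` is an `X`-exact short exact sequence: a short exact sequence which
stays exact under `Hom(x, −)` for every `x ∈ Xc`. -/
def IsXSes (Xc : Set 𝒞) {K B M : 𝒞} (i : K ⟶ B) (g : B ⟶ M) : Prop :=
  Mono i ∧ Epi g ∧ (∃ w : i ≫ g = 0, (ShortComplex.mk i g w).Exact) ∧
    ∀ x ∈ Xc, ∀ f : x ⟶ M, ∃ h : x ⟶ B, h ≫ g = f

/-- `PresC Xc C n M`: there is an `X`-exact sequence `C_n → ⋯ → C_1 → M → 0` with all
`C_i ∈ C` (defined by splicing `X`-exact short exact sequences). -/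
def PresC (Xc : Set 𝒞) (C : Set 𝒞) : ℕ → 𝒞 → Prop
  | 0, _ => True
  | n + 1, M => ∃ (B K : 𝒞) (i : K ⟶ B) (g : B ⟶ M),
      B ∈ C ∧ IsXSes Xc i g ∧ PresC Xc C n K

/-- `M ∈ _T X`: `M` has an `X`-exact `Add T`-resolution with all syzygies
(including `M` itself) in `T^{X⊥}`. -/
def TXClass [HasCoproducts.{0} 𝒞] (Xc : Set 𝒞) (T M : 𝒞) : Prop :=
  ∃ (K : ℕ → 𝒞) (Tn : ℕ → 𝒞) (i : ∀ n, K (n + 1) ⟶ Tn n) (g : ∀ n, Tn n ⟶ K n),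
    K 0 = M ∧ (∀ n, InAdd T (Tn n)) ∧ (∀ n, ExtVanish Xc T (K n)) ∧
    ∀ n, IsXSes Xc (i n) (g n)

/-- `L ∈ (\widehat{Add_X T})_{n+1}`: there is an `X`-exact sequence
`0 → T_{n+1} → ⋯ → T_1 → L → 0` with all `T_i ∈ Add T`. -/
def AddHatN [HasCoproducts.{0} 𝒞] (Xc : Set 𝒞) (T : 𝒞) : ℕ → 𝒞 → Prop
  | 0, L => InAdd T L
  | n + 1, L => ∃ (B K : 𝒞) (i : K ⟶ B) (g : B ⟶ L),
      InAdd T B ∧ IsXSes Xc i g ∧ AddHatN Xc T n K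

/-- `CoresAdd Xc T n M`: there is an `X`-exact sequence `0 → M → T_0 → ⋯ → T_n → 0` with all
`T_i ∈ Add T`. -/
def CoresAdd [HasCoproducts.{0} 𝒞] (Xc : Set 𝒞) (T : 𝒞) : ℕ → 𝒞 → Prop
  | 0, M => InAdd T M
  | n + 1, M => ∃ (B C : 𝒞) (i : M ⟶ B) (g : B ⟶ C),
      InAdd T B ∧ IsXSes Xc i g ∧ CoresAdd Xc T n C

/-- `XResLen C n M`: there is an exact sequence `0 → X_n → ⋯ → X_0 → M → 0` with all
`X_i ∈ C`. -/
def XResLen (C : Set 𝒞) : ℕ → 𝒞 → Prop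
  | 0, M => M ∈ C
  | n + 1, M => ∃ (X0 K : 𝒞) (i : K ⟶ X0) (g : X0 ⟶ M) (w : i ≫ g = 0),
      X0 ∈ C ∧ Mono i ∧ Epi g ∧ (ShortComplex.mk i g w).Exact ∧ XResLen C n K

/-- `T` is an `n`-`X`-tilting object: `X`-dim `T ≤ n`, `T` is `X`-self-orthogonal, and every
`X ∈ Xc` has an `X`-exact `Add T`-coresolution `0 → X → T_0 → ⋯ → T_n → 0`. -/
def IsNXTilting [HasCoproducts.{0} 𝒞] (Xc : Set 𝒞) (n : ℕ) (T : 𝒞) : Prop :=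
  (∃ m ≤ n, XResLen Xc m T) ∧ XSelfOrth Xc T ∧ ∀ x ∈ Xc, CoresAdd Xc T n x

end Tilting

section

open ZeroObject

variable {A : Type*} [Category A] {Xc : Set A}

def XSurjective (Xc : Set A) {B M : A} (g : B ⟶ M) : Prop :=
  ∀ x ∈ Xc, ∀ f : x ⟶ M, ∃ h : x ⟶ B, h ≫ g = f

lemma XSurjective.comp {B M N : A} {g : B ⟶ M} {g' : M ⟶ N} (hg : XSurjective Xc g)
    (hg' : XSurjective Xc g') : XSurjective Xc (g ≫ g') := by
  intro x hx f
  obtain ⟨h', rfl⟩ := hg' x hx f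
  obtain ⟨h, rfl⟩ := hg x hx h'
  exact ⟨h, (Category.assoc _ _ _).symm⟩

/-- A right `X`-approximation of `M` factors through `g`, and it is epi by admissibility. -/
lemma XSurjective.epi (hcf : ContravariantlyFinite Xc) (hadm : AdmissibleClass Xc) {B M : A}
    {g : B ⟶ M} (hg : XSurjective Xc g) : Epi g := by
  obtain ⟨c, f, hf⟩ := hcf M
  have := hadm M c f hf
  obtain ⟨h, hh⟩ := hg c hf.1 f
  exact epi_of_epi_fac hh

variable [Abelian A]

namespace IsXSes

variable {K B M : A} {i : K ⟶ B} {g : B ⟶ M}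

lemma mono (hs : IsXSes Xc i g) : Mono i := hs.1

lemma epi (hs : IsXSes Xc i g) : Epi g := hs.2.1

lemma w (hs : IsXSes Xc i g) : i ≫ g = 0 := hs.2.2.1.choose

lemma w_assoc (hs : IsXSes Xc i g) {Z : A} (h : M ⟶ Z) : i ≫ g ≫ h = 0 := by
  rw [← Category.assoc, hs.w, zero_comp]

lemma xSurjective (hs : IsXSes Xc i g) : XSurjective Xc g := hs.2.2.2

lemma lift (hs : IsXSes Xc i g) {W : A} (t : W ⟶ B) (ht : t ≫ g = 0) :
    ∃ u : W ⟶ K, u ≫ i = t :=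
  have := hs.mono
  hs.2.2.1.choose_spec.lift' t ht

lemma of_lift (hi : Mono i) (hg : Epi g) (w : i ≫ g = 0)
    (hlift : ∀ {W : A} (t : W ⟶ B), t ≫ g = 0 → ∃ u : W ⟶ K, u ≫ i = t)
    (hX : XSurjective Xc g) : IsXSes Xc i g := by
  refine ⟨hi, hg, ⟨w, (ShortComplex.exact_iff_exact_up_to_refinements _).2 ?_⟩, hX⟩
  intro _ t ht
  obtain ⟨u, hu⟩ := hlift t ht
  exact ⟨_, 𝟙 _, inferInstance, u, by simpa using hu.symm⟩

lemma kernel (hg : Epi g) (hX : XSurjective Xc g) : IsXSes Xc (kernel.ι g) g :=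
  of_lift inferInstance hg (kernel.condition g) (fun t ht => ⟨kernel.lift g t ht, by simp⟩) hX

lemma zero_id (M : A) : IsXSes Xc (0 : (0 : A) ⟶ M) (𝟙 M) :=
  of_lift ⟨fun _ _ _ => (isZero_zero A).eq_of_tgt _ _⟩ inferInstance zero_comp
    (fun t ht => ⟨0, by simpa using ht.symm⟩) (fun _ _ f => ⟨f, Category.comp_id f⟩)

lemma of_isPullback {L E K' : A} {l : L ⟶ E} {g : E ⟶ M} (hs : IsXSes Xc l g) {P : A}
    {fst : P ⟶ E} {snd : P ⟶ K'} {f : K' ⟶ M} (sq : IsPullback fst snd g f) :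
    IsXSes Xc (sq.lift l 0 (by simp [hs.w])) snd := by
  have := hs.mono
  have := hs.epi
  refine of_lift (mono_of_mono_fac (sq.lift_fst _ _ _)) (Abelian.epi_snd_of_isLimit g f sq.isLimit)
    (sq.lift_snd _ _ _) ?_ ?_
  · intro W t ht
    obtain ⟨u, hu⟩ := hs.lift (t ≫ fst) (by rw [Category.assoc, sq.w, ← Category.assoc, ht,
      zero_comp])
    exact ⟨u, sq.hom_ext (by simp [hu]) (by simp [ht])⟩
  · intro x hx f'
    obtain ⟨h, hh⟩ := hs.xSurjective x hx (f' ≫ f)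
    exact ⟨sq.lift h f' hh, sq.lift_snd _ _ _⟩

lemma comp_of_isPullback (hs : IsXSes Xc i g) {T₀ : A} {gB : T₀ ⟶ B} (hgB : Epi gB)
    (hXgB : XSurjective Xc gB) {P : A} {fst : P ⟶ T₀} {snd : P ⟶ K}
    (sq : IsPullback fst snd gB i) : IsXSes Xc fst (gB ≫ g) := by
  have := hs.mono
  have := hs.epi
  refine of_lift ⟨fun a b hab => sq.hom_ext hab ?_⟩ (epi_comp _ _)
    (by rw [sq.w_assoc, hs.w, comp_zero]) ?_ (hXgB.comp hs.xSurjective)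
  · rw [← cancel_mono i, Category.assoc, Category.assoc, ← sq.w, ← Category.assoc, hab,
      Category.assoc]
  · intro W t ht
    obtain ⟨u, hu⟩ := hs.lift (t ≫ gB) (by rw [Category.assoc, ht])
    exact ⟨sq.lift t u hu.symm, sq.lift_fst _ _ _⟩

end IsXSes

namespace ExtVanish

variable {T M N : A}

lemma of_retract (s : M ⟶ N) (r : N ⟶ M) (hsr : s ≫ r = 𝟙 M) (h : ExtVanish Xc T N) :
    ExtVanish Xc T M := by
  intro R i f hf
  obtain ⟨g, hg⟩ := h R i (f ≫ s) (by rw [← Category.assoc, hf, zero_comp])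
  exact ⟨g ≫ r, by rw [← Category.assoc, hg, Category.assoc, hsr, Category.comp_id]⟩

lemma of_isXSes {L : A} {l : L ⟶ N} {p : N ⟶ M} (hs : IsXSes Xc l p)
    (hL : ExtVanish Xc T L) (hM : ExtVanish Xc T M) : ExtVanish Xc T N := by
  intro R i f hf
  have := hs.mono
  obtain ⟨gM, hgM⟩ := hM R i (f ≫ p) (by rw [← Category.assoc, hf, zero_comp])
  obtain ⟨h, hh⟩ := hs.xSurjective (R.P i) (R.mem i) gM
  obtain ⟨u, hu⟩ := hs.lift (f - R.d i ≫ h) (by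
    rw [Preadditive.sub_comp, Category.assoc, hh, hgM, sub_self])
  obtain ⟨v, hv⟩ := hL R i u (by
    rw [← cancel_mono l, Category.assoc, hu, zero_comp, Preadditive.comp_sub, hf, zero_sub,
      ← Category.assoc, R.dd i, zero_comp, neg_zero])
  refine ⟨h + v ≫ l, ?_⟩
  rw [Preadditive.comp_add, ← Category.assoc, hv, hu, add_sub_cancel]

end ExtVanish

lemma XSelfOrth.extVanish [HasCoproducts.{0} A] {T K : A} (hso : XSelfOrth Xc T)
    (hK : InAdd T K) : ExtVanish Xc T K := by
  obtain ⟨I, J, ⟨e⟩⟩ := hK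
  exact (hso I).of_retract (biprod.inl ≫ e.hom) (e.inv ≫ biprod.fst) (by simp)

lemma exists_leftRes (hcf : ContravariantlyFinite Xc) (hadm : AdmissibleClass Xc) (M : A) :
    ∃ R : LeftRes Xc M, Epi R.ε ∧
      ∀ {W : A} (u : R.P 0 ⟶ W), R.d 0 ≫ u = 0 → ∃ t : M ⟶ W, R.ε ≫ t = u := by
  choose c f hf using hcf
  have hepi : ∀ N : A, Epi (f N) := fun N => hadm N (c N) (f N) (hf N)
  let syz : ℕ → A := fun n => Nat.rec (motive := fun _ => A) M (fun _ N => kernel (f N)) n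
  refine ⟨⟨fun n => c (syz n), fun n => f (syz (n + 1)) ≫ kernel.ι (f (syz n)), f (syz 0),
    fun n => (hf (syz n)).1, fun n => by simp, by simp, (hf M).2, ?_, ?_⟩, hepi M, ?_⟩
  · intro x hx g hg
    obtain ⟨h, hh⟩ := (hf (syz (0 + 1))).2 x hx (kernel.lift (f (syz 0)) g hg)
    exact ⟨h, by rw [← Category.assoc, hh, kernel.lift_ι]⟩
  · intro x hx n g hg
    obtain ⟨h, hh⟩ := (hf (syz (n + 2))).2 x hx (kernel.lift (f (syz (n + 1))) g
      (by rwa [← cancel_mono (kernel.ι _), Category.assoc, zero_comp]))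
    exact ⟨h, by rw [← Category.assoc, hh, kernel.lift_ι]⟩
  · intro W u hu
    have := hepi M
    refine ⟨Abelian.epiDesc (f (syz 0)) u ?_, Abelian.comp_epiDesc _ _ _⟩
    rw [← cancel_epi (f (syz 1)), comp_zero, ← Category.assoc]
    exact hu

/-- Lift `ε ≫ t` to `u : P₀ ⟶ E`; the obstruction `P₁ ⟶ L` is a cocycle, hence a coboundary
since `Ext¹_X(T, L) = 0`, and the corrected lift factors through `ε`. -/
lemma IsXSes.exists_lift_of_extVanish (hcf : ContravariantlyFinite Xc)
    (hadm : AdmissibleClass Xc) {T L E M : A} {l : L ⟶ E} {p : E ⟶ M} (hs : IsXSes Xc l p)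
    (hL : ExtVanish Xc T L) (t : T ⟶ M) : ∃ t' : T ⟶ E, t' ≫ p = t := by
  have := hs.mono
  obtain ⟨R, hε, hcok⟩ := exists_leftRes hcf hadm T
  obtain ⟨u, hu⟩ := hs.xSurjective (R.P 0) (R.mem 0) (R.ε ≫ t)
  obtain ⟨v, hv⟩ := hs.lift (R.d 0 ≫ u) (by
    rw [Category.assoc, hu, ← Category.assoc, R.dε, zero_comp])
  obtain ⟨g, hg⟩ := hL R 0 v (by
    rw [← cancel_mono l, Category.assoc, hv, ← Category.assoc, R.dd 0, zero_comp, zero_comp])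
  obtain ⟨t', ht'⟩ := hcok (u - g ≫ l) (by rw [Preadditive.comp_sub, ← Category.assoc, hg, hv,
    sub_self])
  refine ⟨t', ?_⟩
  rw [← cancel_epi R.ε, ← Category.assoc, ht', Preadditive.sub_comp, Category.assoc, hs.w,
    comp_zero, sub_zero, hu]

lemma IsXSes.exists_lift_of_inAdd [HasCoproducts.{0} A] (hcf : ContravariantlyFinite Xc)
    (hadm : AdmissibleClass Xc) {T T' L E M : A} (hT' : InAdd T T') {l : L ⟶ E} {p : E ⟶ M}
    (hs : IsXSes Xc l p) (hL : ExtVanish Xc T L) (t : T' ⟶ M) : ∃ t' : T' ⟶ E, t' ≫ p = t := by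
  obtain ⟨I, J, ⟨e⟩⟩ := hT'
  choose s hs using fun j : I =>
    hs.exists_lift_of_extVanish hcf hadm hL (Sigma.ι (fun _ : I => T) j ≫ e.inv ≫ biprod.fst ≫ t)
  refine ⟨biprod.inl ≫ e.hom ≫ Sigma.desc s, ?_⟩
  have hdesc : Sigma.desc s ≫ p = e.inv ≫ biprod.fst ≫ t := by
    ext j
    simp [hs]
  simp [hdesc]

section AddT

variable [HasCoproducts.{0} A]

lemma inAdd_of_isZero {T Z : A} (hZ : IsZero Z) : InAdd T Z :=
  ⟨PEmpty, 0, ⟨IsZero.iso ((biprod_isZero_iff _ _).2 ⟨hZ, isZero_zero A⟩)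
    (isColimitEquivIsInitialOfIsEmpty _ _ (colimit.isColimit _)).isZero⟩⟩

noncomputable def biprodInterchangeIso (W X Y Z : A) : (W ⊞ X) ⊞ (Y ⊞ Z) ≅ (W ⊞ Y) ⊞ (X ⊞ Z) where
  hom := biprod.lift
    (biprod.lift (biprod.fst ≫ biprod.fst) (biprod.snd ≫ biprod.fst))
    (biprod.lift (biprod.fst ≫ biprod.snd) (biprod.snd ≫ biprod.snd))
  inv := biprod.lift
    (biprod.lift (biprod.fst ≫ biprod.fst) (biprod.snd ≫ biprod.fst))
    (biprod.lift (biprod.fst ≫ biprod.snd) (biprod.snd ≫ biprod.snd))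
  hom_inv_id := by ext <;> simp
  inv_hom_id := by ext <;> simp

noncomputable def biprodSigmaConstIso (T : A) (I J : Type) :
    ((∐ fun _ : I => T) ⊞ (∐ fun _ : J => T)) ≅ ∐ fun _ : I ⊕ J => T where
  hom := biprod.desc (Sigma.desc fun i => Sigma.ι (fun _ : I ⊕ J => T) (Sum.inl i))
    (Sigma.desc fun j => Sigma.ι (fun _ : I ⊕ J => T) (Sum.inr j))
  inv := Sigma.desc fun
    | Sum.inl i => Sigma.ι (fun _ : I => T) i ≫ biprod.inl
    | Sum.inr j => Sigma.ι (fun _ : J => T) j ≫ biprod.inr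
  hom_inv_id := by
    apply biprod.hom_ext' <;> ext <;> simp
  inv_hom_id := by
    ext (i | j) <;> simp

lemma InAdd.biprod {T K₁ K₂ : A} (h₁ : InAdd T K₁) (h₂ : InAdd T K₂) : InAdd T (K₁ ⊞ K₂) := by
  obtain ⟨I₁, J₁, ⟨e₁⟩⟩ := h₁
  obtain ⟨I₂, J₂, ⟨e₂⟩⟩ := h₂
  exact ⟨I₁ ⊕ I₂, J₁ ⊞ J₂,
    ⟨biprodInterchangeIso K₁ K₂ J₁ J₂ ≪≫ biprod.mapIso e₁ e₂ ≪≫ biprodSigmaConstIso T I₁ I₂⟩⟩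

end AddT

section Horseshoe

variable {A₁ C B₁ A₂ T_A B₂ T_B : A} {a : A₁ ⟶ C} {b : C ⟶ B₁} {iA : A₂ ⟶ T_A}
  {gA : T_A ⟶ A₁} {iB : B₂ ⟶ T_B} {gB : T_B ⟶ B₁} {φ : T_B ⟶ C}

lemma xSurjective_horseshoe (hC : IsXSes Xc a b) (hA : IsXSes Xc iA gA)
    (hB : IsXSes Xc iB gB) (hφ : φ ≫ b = gB) : XSurjective Xc (biprod.desc (gA ≫ a) φ) := by
  intro x hx f
  obtain ⟨h, hh⟩ := hB.xSurjective x hx (f ≫ b)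
  obtain ⟨u, hu⟩ := hC.lift (f - h ≫ φ) (by
    rw [Preadditive.sub_comp, Category.assoc, hφ, hh, sub_self])
  obtain ⟨u', rfl⟩ := hA.xSurjective x hx u
  exact ⟨biprod.lift u' h, by rw [biprod.lift_desc, ← Category.assoc, hu, sub_add_cancel]⟩

lemma exists_isXSes_kernel_horseshoe (hcf : ContravariantlyFinite Xc)
    (hadm : AdmissibleClass Xc) (hC : IsXSes Xc a b) (hA : IsXSes Xc iA gA)
    (hB : IsXSes Xc iB gB) (hφ : φ ≫ b = gB) :
    ∃ (a' : A₂ ⟶ kernel (biprod.desc (gA ≫ a) φ)) (b' : kernel (biprod.desc (gA ≫ a) φ) ⟶ B₂),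
      IsXSes Xc a' b' := by
  set q := biprod.desc (gA ≫ a) φ with hq
  have := hA.mono
  have := hB.mono
  have := hC.mono
  have hqb : q ≫ b = biprod.snd ≫ gB := by ext <;> simp [hq, hC.w, hφ]
  obtain ⟨b', hb'⟩ := hB.lift (kernel.ι q ≫ biprod.snd) (by
    rw [Category.assoc, ← hqb, kernel.condition_assoc, zero_comp])
  set a' := kernel.lift q (iA ≫ biprod.inl) (by simp [hq, hA.w_assoc])
  have ha'ι : a' ≫ kernel.ι q = iA ≫ biprod.inl := kernel.lift_ι _ _ _
  have hX : XSurjective Xc b' := by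
    intro x hx f
    obtain ⟨u, hu⟩ := hC.lift (f ≫ iB ≫ φ) (by rw [Category.assoc, Category.assoc, hφ, hB.w,
      comp_zero])
    obtain ⟨u', rfl⟩ := hA.xSurjective x hx u
    have hk : biprod.lift (-u') (f ≫ iB) ≫ q = 0 := by
      rw [hq, biprod.lift_desc, Preadditive.neg_comp, ← Category.assoc, hu, Category.assoc,
        neg_add_cancel]
    refine ⟨kernel.lift q _ hk, ?_⟩
    rw [← cancel_mono iB, Category.assoc, hb', kernel.lift_ι_assoc, biprod.lift_snd]
  refine ⟨a', b', IsXSes.of_lift (mono_of_mono_fac ha'ι) (hX.epi hcf hadm) ?_ ?_ hX⟩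
  · rw [← cancel_mono iB, Category.assoc, hb', ← Category.assoc, ha'ι, Category.assoc,
      biprod.inl_snd, comp_zero, zero_comp]
  · intro W k hk
    have hsnd : k ≫ kernel.ι q ≫ biprod.snd = 0 := by
      rw [← hb', ← Category.assoc, hk, zero_comp]
    have hfst : k ≫ kernel.ι q = (k ≫ kernel.ι q ≫ biprod.fst) ≫ biprod.inl := by
      ext <;> simp [hsnd]
    obtain ⟨u, hu⟩ := hA.lift (k ≫ kernel.ι q ≫ biprod.fst) (by
      rw [← cancel_mono a, zero_comp, Category.assoc, ← biprod.inl_desc (gA ≫ a) φ, ← hq,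
        ← Category.assoc, ← hfst, Category.assoc, kernel.condition, comp_zero])
    refine ⟨u, ?_⟩
    rw [← cancel_mono (kernel.ι q), Category.assoc, ha'ι, ← Category.assoc, hu, ← hfst]

end Horseshoe

section TXClass

variable [HasCoproducts.{0} A] {T : A}

lemma TXClass.unfold {M : A} (h : TXClass Xc T M) :
    ExtVanish Xc T M ∧ ∃ (K T₀ : A) (i : K ⟶ T₀) (g : T₀ ⟶ M),
      InAdd T T₀ ∧ IsXSes Xc i g ∧ TXClass Xc T K := by
  obtain ⟨K, Tn, i, g, rfl, hAdd, hExt, hses⟩ := h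
  exact ⟨hExt 0, K 1, Tn 0, i 0, g 0, hAdd 0, hses 0,
    ⟨fun n => K (n + 1), fun n => Tn (n + 1), fun n => i (n + 1), fun n => g (n + 1),
      rfl, fun n => hAdd (n + 1), fun n => hExt (n + 1), fun n => hses (n + 1)⟩⟩

lemma TXClass.coinduct {S : Set A}
    (hS : ∀ M ∈ S, ExtVanish Xc T M ∧ ∃ (K T₀ : A) (i : K ⟶ T₀) (g : T₀ ⟶ M),
      InAdd T T₀ ∧ IsXSes Xc i g ∧ K ∈ S) {M : A} (hM : M ∈ S) : TXClass Xc T M := by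
  choose hExt K T₀ i g hAdd hses hK using hS
  let syz : ℕ → S := fun n => Nat.rec ⟨M, hM⟩ (fun _ N => ⟨K N N.2, hK N N.2⟩) n
  exact ⟨fun n => (syz n).1, fun n => T₀ _ (syz n).2, fun n => i _ (syz n).2,
    fun n => g _ (syz n).2, rfl, fun n => hAdd _ (syz n).2, fun n => hExt _ (syz n).2,
    fun n => hses _ (syz n).2⟩

lemma txClass_of_inAdd (hso : XSelfOrth Xc T) {K : A} (hK : InAdd T K) : TXClass Xc T K :=
  TXClass.coinduct (S := {K | InAdd T K}) (fun M hM => ⟨hso.extVanish hM, 0, M, 0, 𝟙 M, hM,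
    IsXSes.zero_id M, inAdd_of_isZero (isZero_zero A)⟩) hK

lemma TXClass.of_isXSes (hcf : ContravariantlyFinite Xc) (hadm : AdmissibleClass Xc)
    {L N K : A} {l : L ⟶ N} {p : N ⟶ K} (hs : IsXSes Xc l p) (hL : TXClass Xc T L)
    (hK : TXClass Xc T K) : TXClass Xc T N := by
  refine TXClass.coinduct (S := {N | ∃ (L K : A) (l : L ⟶ N) (p : N ⟶ K),
    IsXSes Xc l p ∧ TXClass Xc T L ∧ TXClass Xc T K}) ?_ ⟨L, K, l, p, hs, hL, hK⟩
  rintro N ⟨L, K, l, p, hs, hL, hK⟩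
  obtain ⟨hExtL, L', T_L, iL, gL, hT_L, hsL, hL'⟩ := hL.unfold
  obtain ⟨hExtK, K', T_K, iK, gK, hT_K, hsK, hK'⟩ := hK.unfold
  obtain ⟨φ, hφ⟩ := hs.exists_lift_of_inAdd hcf hadm hT_K hExtL gK
  have hq := xSurjective_horseshoe hs hsL hsK hφ
  obtain ⟨a', b', hs'⟩ := exists_isXSes_kernel_horseshoe hcf hadm hs hsL hsK hφ
  exact ⟨hExtL.of_isXSes hs hExtK, _, _, _, _, hT_L.biprod hT_K,
    IsXSes.kernel (hq.epi hcf hadm) hq, L', K', a', b', hs', hL', hK'⟩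

end TXClass

def IsClosedUnderXExtensions (Xc C : Set A) : Prop :=
  ∀ ⦃L N K : A⦄ ⦃l : L ⟶ N⦄ ⦃p : N ⟶ K⦄, IsXSes Xc l p → L ∈ C → K ∈ C → N ∈ C

lemma presC_mono {C D : Set A} (h : C ⊆ D) : ∀ (n : ℕ) {M : A}, PresC Xc C n M → PresC Xc D n M
  | 0, _, _ => trivial
  | n + 1, _, ⟨B, K, i, g, hB, hs, hK⟩ => ⟨B, K, i, g, h hB, hs, presC_mono h n hK⟩

lemma presC_of_isXSes {C : Set A} (hC : IsClosedUnderXExtensions Xc C) {L N K : A}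
    {l : L ⟶ N} {p : N ⟶ K} (hs : IsXSes Xc l p) (hL : L ∈ C) :
    ∀ {n : ℕ}, PresC Xc C n K → PresC Xc C n N
  | 0, _ => trivial
  | _ + 1, ⟨_, K₁, _, g₁, hB, hs₁, hK₁⟩ =>
    have sq := IsPullback.of_hasPullback g₁ p
    ⟨pullback g₁ p, K₁, _, _, hC (hs.of_isPullback sq.flip) hL hB, hs₁.of_isPullback sq, hK₁⟩

lemma presC_subset_presC {C D : Set A} (hC : IsClosedUnderXExtensions Xc C)
    (hcover : ∀ B ∈ C, ∃ (L D₀ : A) (l : L ⟶ D₀) (g : D₀ ⟶ B), D₀ ∈ D ∧ IsXSes Xc l g ∧ L ∈ C) :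
    ∀ (n : ℕ) {M : A}, PresC Xc C n M → PresC Xc D n M
  | 0, _, _ => trivial
  | n + 1, _, ⟨B, K, i, g, hB, hs, hK⟩ => by
    obtain ⟨L, D₀, l, gB, hD₀, hsB, hL⟩ := hcover B hB
    have sq := IsPullback.of_hasPullback gB i
    exact ⟨D₀, pullback gB i, _, _, hD₀, hs.comp_of_isPullback hsB.epi hsB.xSurjective sq,
      presC_subset_presC hC hcover n (presC_of_isXSes hC (hsB.of_isPullback sq) hL hK)⟩

end

/-- If `T` is `X`-self-orthogonal with respect to an admissible balanced pair `(X, Y)`, then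
`Pres^n_X(_T X) = Pres^n_X(T)` for every `n ≥ 1`. -/
theorem presC_TX_eq_presC_addT {A : Type*} [Category A] [Abelian A] [HasCoproducts.{0} A]
    (Xc Yc : Set A) (hbp : BalancedPair Xc Yc) (hadm : AdmissibleClass Xc)
    (T : A) (hso : XSelfOrth Xc T) :
    ∀ n : ℕ, 1 ≤ n →
      {M : A | PresC Xc {K | TXClass Xc T K} n M} =
        {M : A | PresC Xc {K | InAdd T K} n M} := by
  intro n _
  ext M
  exact ⟨presC_subset_presC (fun _ _ _ _ _ hs hL hK => hL.of_isXSes hbp.1 hadm hs hK)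
    (fun _ hB => hB.unfold.2) n, presC_mono (fun _ => txClass_of_inAdd hso) n⟩
end
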